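/- Let f be a probability density on ℝ^d, let α ∈ L²(f) with ∫ α f = 0, and let k(u) = 1/2 + (1 + e^{−4u})^{−1}. Then the normalising constant of the perturbed density satisfies ∫ k(t α(x)) f(x) dx − 1 = o(t²) as t → 0; that is, lim_{t→0} t^{−2} ( ∫ k(t α(x)) f(x) dx − 1 ) = 0. -/

import Mathlib

/-!
Since `k(u) = 1 + tanh (2u) / 2` and `tanh' = 1 - tanh²` with `|tanh x| ≤ |x|`, the mean value
theorem bounds the remainder `k(u) - 1 - u` by `4|u|³`; together with `|tanh| < 1` this gives
`|k(u) - 1 - u| ≤ 4u²` on all of `ℝ`.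
The linear term integrates to `0` because `α` has mean zero, so
`t⁻² (∫ k(tα) dμ - 1) = ∫ t⁻² (k(tα) - 1 - tα) dμ`; the integrand tends to `0` pointwise and is
dominated by `4α²`, which is integrable because `α ∈ L²(μ)`.
-/

open MeasureTheory Filter

noncomputable def kFun (u : ℝ) : ℝ := 1 / 2 + (1 + Real.exp (-4 * u))⁻¹

open Set Asymptotics Topology

theorem abs_sub_le_mul_abs_of_hasDerivAt {f f' : ℝ → ℝ} {x C : ℝ}
    (hf : ∀ w, HasDerivAt f (f' w) w) (hC : ∀ w ∈ uIcc 0 x, |f' w| ≤ C) :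
    |f x - f 0| ≤ C * |x| := by
  simpa using (convex_uIcc 0 x).norm_image_sub_le_of_norm_hasDerivWithin_le
    (fun w _ ↦ (hf w).hasDerivWithinAt) hC left_mem_uIcc right_mem_uIcc

namespace Real

theorem hasDerivAt_tanh (x : ℝ) : HasDerivAt tanh (1 - tanh x ^ 2) x := by
  have h := (hasDerivAt_sinh x).div (hasDerivAt_cosh x) (cosh_pos x).ne'
  rw [show tanh = sinh / cosh from funext tanh_eq_sinh_div_cosh]
  refine h.congr_deriv ?_
  rw [Pi.div_apply]
  field_simp

theorem abs_tanh_le_abs (x : ℝ) : |tanh x| ≤ |x| := by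
  have h := abs_sub_le_mul_abs_of_hasDerivAt (C := 1) (x := x) hasDerivAt_tanh fun w _ ↦ by
    rw [abs_le]
    constructor <;> nlinarith [tanh_sq_lt_one w, sq_nonneg (tanh w)]
  simpa using h

theorem abs_tanh_sub_self_le_abs_pow_three (x : ℝ) : |tanh x - x| ≤ |x| ^ 3 := by
  have h := abs_sub_le_mul_abs_of_hasDerivAt (f := fun y ↦ tanh y - y) (C := x ^ 2) (x := x)
    (fun w ↦ (hasDerivAt_tanh w).sub (hasDerivAt_id w)) fun w hw ↦ by
      have hwx : |w| ≤ |x| := by simpa using abs_sub_left_of_mem_uIcc hw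
      rw [sub_sub_cancel_left, abs_neg, abs_pow, ← sq_abs x]
      exact pow_le_pow_left₀ (abs_nonneg _) ((abs_tanh_le_abs w).trans hwx) 2
  simpa [pow_succ, sq_abs] using h

theorem abs_tanh_sub_self_le_two_mul_sq (x : ℝ) : |tanh x - x| ≤ 2 * x ^ 2 := by
  rcases le_total |x| 1 with hx | hx
  · nlinarith [abs_tanh_sub_self_le_abs_pow_three x, abs_nonneg x, sq_abs x]
  · nlinarith [abs_sub (tanh x) x, abs_tanh_lt_one x, sq_abs x]

end Real

section SecondOrderRemainder

variable {Ω : Type*} [MeasurableSpace Ω] {μ : Measure Ω} {g : ℝ → ℝ} {C : ℝ} {α : Ω → ℝ}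

theorem integrable_comp_mul_of_abs_le_sq (hg : Measurable g) (hgC : ∀ u, |g u| ≤ C * u ^ 2)
    (hα : MemLp α 2 μ) (t : ℝ) : Integrable (fun x ↦ g (t * α x)) μ := by
  refine (hα.integrable_sq.const_mul (C * t ^ 2)).mono
    (hg.comp_aemeasurable (hα.aemeasurable.const_mul t)).aestronglyMeasurable
    (ae_of_all _ fun x ↦ ?_)
  calc ‖g (t * α x)‖ ≤ C * (t * α x) ^ 2 := hgC _
    _ = C * t ^ 2 * α x ^ 2 := by ring
    _ ≤ ‖C * t ^ 2 * α x ^ 2‖ := le_abs_self _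

theorem tendsto_integral_comp_mul_div_sq (hg : Measurable g) (hgC : ∀ u, |g u| ≤ C * u ^ 2)
    (hg0 : g =o[𝓝 0] fun u ↦ u ^ 2) (hα : MemLp α 2 μ) :
    Tendsto (fun t ↦ (∫ x, g (t * α x) ∂μ) / t ^ 2) (𝓝[≠] 0) (𝓝 0) := by
  have hlim : ∀ a : ℝ, Tendsto (fun t ↦ g (t * a) / t ^ 2) (𝓝 0) (𝓝 0) := fun a ↦ by
    have hta : Tendsto (fun t ↦ t * a) (𝓝 0) (𝓝 0) := by
      simpa using (continuous_mul_const a).tendsto 0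
    have hsq : (fun t ↦ (t * a) ^ 2) =O[𝓝 0] fun t : ℝ ↦ t ^ 2 := by
      simpa only [mul_pow, mul_comm] using
        (isBigO_refl (fun t : ℝ ↦ t ^ 2) _).const_mul_left (a ^ 2)
    exact ((hg0.comp_tendsto hta).trans_isBigO hsq).tendsto_div_nhds_zero
  have hdc := tendsto_integral_filter_of_dominated_convergence (fun x ↦ C * α x ^ 2)
    (Eventually.of_forall fun t ↦
      ((integrable_comp_mul_of_abs_le_sq hg hgC hα t).div_const _).aestronglyMeasurable)
    (eventually_nhdsWithin_of_forall fun t ht ↦ ae_of_all _ fun x ↦ by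
      have ht2 : 0 < t ^ 2 := sq_pos_of_ne_zero ht
      rw [Real.norm_eq_abs, abs_div, abs_of_pos ht2, div_le_iff₀ ht2]
      linarith [hgC (t * α x), show (t * α x) ^ 2 = α x ^ 2 * t ^ 2 by ring])
    (hα.integrable_sq.const_mul C)
    (ae_of_all _ fun x ↦ (hlim (α x)).mono_left nhdsWithin_le_nhds)
  rw [integral_zero] at hdc
  exact hdc.congr fun t ↦ integral_div _ _

theorem tendsto_integral_comp_mul_sub_div_sq [IsProbabilityMeasure μ] {φ : ℝ → ℝ} {a b : ℝ}
    (hφ : Measurable φ) (hφC : ∀ u, |φ u - a - b * u| ≤ C * u ^ 2)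
    (hφ0 : (fun u ↦ φ u - a - b * u) =o[𝓝 0] fun u ↦ u ^ 2) (hα : MemLp α 2 μ)
    (hα0 : ∫ x, α x ∂μ = 0) :
    Tendsto (fun t ↦ ((∫ x, φ (t * α x) ∂μ) - a) / t ^ 2) (𝓝[≠] 0) (𝓝 0) := by
  have hg : Measurable fun u ↦ φ u - a - b * u := by fun_prop
  have hsplit : ∀ t, (∫ x, φ (t * α x) ∂μ) - a = ∫ x, φ (t * α x) - a - b * (t * α x) ∂μ := by
    intro t
    have hα_mul : Integrable (fun x ↦ b * (t * α x)) μ :=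
      ((hα.integrable one_le_two).const_mul t).const_mul b
    have hlin_int : Integrable (fun x ↦ a + b * (t * α x)) μ := (integrable_const a).add hα_mul
    have hlin : ∫ x, a + b * (t * α x) ∂μ = a := by
      rw [integral_add (integrable_const a) hα_mul, integral_const_mul, integral_const_mul, hα0]
      simp
    have hsum := integral_add (integrable_comp_mul_of_abs_le_sq hg hφC hα t) hlin_int
    simp only [sub_sub, sub_add_cancel] at hsum ⊢
    rw [hsum, hlin, add_sub_cancel_right]
  simpa only [hsplit] using tendsto_integral_comp_mul_div_sq hg hφC hφ0 hα

end SecondOrderRemainder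

open Real in
theorem kFun_eq_one_add_tanh (u : ℝ) : kFun u = 1 + tanh (2 * u) / 2 := by
  have hexp : exp (-4 * u) = exp (-(2 * u)) * exp (-(2 * u)) := by rw [← exp_add]; ring_nf
  have hinv : exp (2 * u) * exp (-(2 * u)) = 1 := by rw [← exp_add]; simp
  have := exp_pos (-(2 * u))
  have := exp_pos (2 * u)
  rw [kFun, tanh_eq_sinh_div_cosh, sinh_eq, cosh_eq, hexp]
  field_simp
  linear_combination (-2 * exp (-(2 * u))) * hinv

theorem measurable_kFun : Measurable kFun := by
  unfold kFun
  fun_prop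

theorem kFun_sub_one_sub_self (u : ℝ) : kFun u - 1 - u = (Real.tanh (2 * u) - 2 * u) / 2 := by
  rw [kFun_eq_one_add_tanh]
  ring

theorem abs_kFun_sub_one_sub_self_le (u : ℝ) : |kFun u - 1 - u| ≤ 4 * u ^ 2 := by
  rw [kFun_sub_one_sub_self, abs_div, abs_two]
  linarith [Real.abs_tanh_sub_self_le_two_mul_sq (2 * u)]

theorem isLittleO_kFun_sub_one_sub_self :
    (fun u ↦ kFun u - 1 - u) =o[𝓝 0] fun u ↦ u ^ 2 := by
  refine (isBigO_of_le' (c := 4) (g := fun u : ℝ ↦ u ^ 3) (𝓝 0) fun u ↦ ?_).trans_isLittleO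
    (isLittleO_pow_pow (by norm_num : 2 < 3))
  have h := Real.abs_tanh_sub_self_le_abs_pow_three (2 * u)
  rw [abs_mul, abs_two] at h
  rw [kFun_sub_one_sub_self, Real.norm_eq_abs, norm_pow, Real.norm_eq_abs, abs_div, abs_two]
  linarith

theorem perturbation_normalising_constant_general
    (d : ℕ)
    (μ : Measure (Fin d → ℝ)) [IsProbabilityMeasure μ]
    (α : (Fin d → ℝ) → ℝ) (hα : MemLp α 2 μ) (hα0 : ∫ x, α x ∂μ = 0) :
    Tendsto (fun t : ℝ => ((∫ x, kFun (t * α x) ∂μ) - 1) / t ^ 2)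
      (nhdsWithin 0 {(0 : ℝ)}ᶜ) (nhds 0) :=
  tendsto_integral_comp_mul_sub_div_sq (b := 1) measurable_kFun
    (by simpa only [one_mul] using abs_kFun_sub_one_sub_self_le)
    (by simpa only [one_mul] using isLittleO_kFun_sub_one_sub_self) hα hα0

/-- The normalising constant of the perturbed density satisfies
`∫ k(t α(x)) f(x) dx − 1 = o(t²)` as `t → 0`, for any mean-zero `α ∈ L²(f)`. -/
theorem perturbation_normalising_constant
    (d : ℕ) (hd : 2 ≤ d)
    (μ : Measure (Fin d → ℝ)) [IsProbabilityMeasure μ]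
    (α : (Fin d → ℝ) → ℝ) (hα : MemLp α 2 μ) (hα0 : ∫ x, α x ∂μ = 0) :
    Tendsto (fun t : ℝ => ((∫ x, kFun (t * α x) ∂μ) - 1) / t ^ 2)
      (nhdsWithin 0 {(0 : ℝ)}ᶜ) (nhds 0) :=
  perturbation_normalising_constant_general d μ α hα hα0
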